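/- arXiv:1803.02661 — 2 statements merged into one kernel-verified Lean document; each statement's English description precedes it below -/
import Mathlib

section
/- Let A and Ã be symmetric n×n real matrices, both of rank at least k, with eigenvalues λ₁ ≥ … ≥ λₙ and λ̃₁ ≥ … ≥ λ̃ₙ respectively. If λ_k > λ̃_{k+1}, then d₂(V_{A,k}, V_{Ã,k}) ≤ ‖A − Ã‖₂ / (λ_k − λ̃_{k+1}). -/
open Matrix MeasureTheory

noncomputable section

/-- Euclidean norm of a vector in `ℝ^n`. -/
def vnorm {n : ℕ} (v : Fin n → ℝ) : ℝ := Real.sqrt (∑ i, v i ^ 2)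

/-- Spectral norm of a matrix (operator norm as a map between Euclidean spaces). -/
def spec {m n : ℕ} (M : Matrix (Fin m) (Fin n) ℝ) : ℝ :=
  ‖LinearMap.toContinuousLinearMap (Matrix.toEuclideanLin M)‖

/-- The four Moore-Penrose conditions. -/
def IsMP {m n : ℕ} (X : Matrix (Fin m) (Fin n) ℝ) (Y : Matrix (Fin n) (Fin m) ℝ) : Prop :=
  X * Y * X = X ∧ Y * X * Y = Y ∧ (X * Y)ᵀ = X * Y ∧ (Y * X)ᵀ = Y * X

/-- The Moore-Penrose pseudoinverse (it always exists and is unique, so this choice-based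
definition picks out exactly the Moore-Penrose pseudoinverse). -/
def pinv {m n : ℕ} (X : Matrix (Fin m) (Fin n) ℝ) : Matrix (Fin n) (Fin m) ℝ := by
  classical exact if h : ∃ Y, IsMP X Y then h.choose else 0

/-- Orthogonal projection onto the column space of a matrix: `P_X = X X⁺`. -/
def projCol {m n : ℕ} (X : Matrix (Fin m) (Fin n) ℝ) : Matrix (Fin m) (Fin m) ℝ := X * pinv X

/-- Distance between column spaces: `d₂(U, W) = ‖P_U - P_W‖₂`. -/
def d2 {m p q : ℕ} (U : Matrix (Fin m) (Fin p) ℝ) (W : Matrix (Fin m) (Fin q) ℝ) : ℝ :=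
  spec (projCol U - projCol W)

/-- `(U, s, V)` is a thin SVD of `X`: orthonormal columns, nonincreasing nonnegative
singular values, and `X = U (diag s) Vᵀ`. -/
def IsThinSVD {m n p : ℕ} (X : Matrix (Fin m) (Fin n) ℝ) (U : Matrix (Fin m) (Fin p) ℝ)
    (s : Fin p → ℝ) (V : Matrix (Fin n) (Fin p) ℝ) : Prop :=
  Uᵀ * U = 1 ∧ Vᵀ * V = 1 ∧ Antitone s ∧ (∀ i, 0 ≤ s i) ∧ X = U * Matrix.diagonal s * Vᵀ

/-- The matrix of the first `k` columns. -/
def firstCols {m p : ℕ} (U : Matrix (Fin m) (Fin p) ℝ) (k : ℕ) (h : k ≤ p) :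
    Matrix (Fin m) (Fin k) ℝ := U.submatrix id (Fin.castLE h)

/-- The matrix of the remaining columns (columns `k+1, …, p` in 1-based indexing). -/
def tailCols {m p : ℕ} (U : Matrix (Fin m) (Fin p) ℝ) (k : ℕ) (h : k ≤ p) :
    Matrix (Fin m) (Fin (p - k)) ℝ :=
  U.submatrix id (fun j => ⟨k + j.1, by have := j.2; omega⟩)

/-- `sv s i` is the `i`-th singular value (1-indexed), `0` past the end. -/
def sv {p : ℕ} (s : Fin p → ℝ) (i : ℕ) : ℝ := by
  classical exact if h : i - 1 < p then s ⟨i - 1, h⟩ else 0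

end


/-!
Let `P = V₁V₁ᵀ` and `Q = W₁W₁ᵀ` be the projections onto the top-`k` eigenvectors of `A` and `Ã`.
For any two orthogonal projections `‖P - Q‖ ≤ max ‖(1 - Q)P‖ ‖(1 - P)Q‖`, and the two terms agree
because both ranges have dimension `k`. Writing `1 - Q = W₂W₂ᵀ` with the remaining eigenvectors of
`Ã`, `‖(1 - Q)P‖ = ‖W₂ᵀV₁‖`, and `X = W₂ᵀV₁` solves the Sylvester equation
`X Λ₁ - Λ̃₂ X = W₂ᵀ(A - Ã)V₁`, where the eigenvalues in `Λ₁` are `≥ λ_k` and those in `Λ̃₂` are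
`≤ λ̃_{k+1}`. Testing it against a top singular pair of `X` gives
`(λ_k - λ̃_{k+1}) ‖X‖ ≤ ‖A - Ã‖`.
-/

open scoped Matrix.Norms.L2Operator ENNReal

namespace ContinuousLinearMap

variable {𝕜 E : Type*} [RCLike 𝕜] [NormedAddCommGroup E] [InnerProductSpace 𝕜 E]
  [CompleteSpace E]

lemma inner_one_sub_apply_apply_eq_zero {q : E →L[𝕜] E} (hq : IsStarProjection q) (x y : E) :
    inner 𝕜 ((1 - q) x) (q y) = 0 := by
  rw [← adjoint_inner_right, ← star_eq_adjoint, hq.one_sub.isSelfAdjoint.star_eq,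
    ← mul_apply_eq_comp, hq.one_sub_mul_self, _root_.zero_apply, inner_zero_right]

lemma norm_sub_le_max_of_isStarProjection {p q : E →L[𝕜] E} (hp : IsStarProjection p)
    (hq : IsStarProjection q) : ‖p - q‖ ≤ max ‖(1 - q) * p‖ ‖(1 - p) * q‖ := by
  set c := max ‖(1 - q) * p‖ ‖(1 - p) * q‖
  have hc : 0 ≤ c := le_max_of_le_left (norm_nonneg _)
  have hqp : ‖q * (1 - p)‖ ≤ c := by
    rw [← norm_star, star_mul, hq.isSelfAdjoint.star_eq, hp.one_sub.isSelfAdjoint.star_eq]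
    exact le_max_right _ _
  refine opNorm_le_bound _ hc fun x => ?_
  have hsplit : (p - q) x = (1 - q) (p x) + -q ((1 - p) x) := by
    simp only [_root_.sub_apply, map_sub]; abel
  have hsum : (1 - p) x + p x = x := by rw [_root_.sub_apply, one_apply_eq_self, sub_add_cancel]
  have hx := norm_add_sq_eq_norm_sq_add_norm_sq_of_inner_eq_zero (𝕜 := 𝕜) _ _
    (inner_one_sub_apply_apply_eq_zero hp x x)
  have hpqx := norm_add_sq_eq_norm_sq_add_norm_sq_of_inner_eq_zero (𝕜 := 𝕜) _ _
    (by rw [inner_neg_right, inner_one_sub_apply_apply_eq_zero hq, neg_zero] :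
      inner 𝕜 ((1 - q) (p x)) (-q ((1 - p) x)) = 0)
  rw [hsum] at hx
  rw [← hsplit, norm_neg] at hpqx
  have h₁ : ‖(1 - q) (p x)‖ ≤ c * ‖p x‖ :=
    calc ‖(1 - q) (p x)‖ = ‖((1 - q) * p) (p x)‖ := by
          rw [mul_apply_eq_comp, ← mul_apply_eq_comp p, hp.1.eq]
      _ ≤ c * ‖p x‖ := by grw [le_opNorm]; gcongr; exact le_max_left _ _
  have h₂ : ‖q ((1 - p) x)‖ ≤ c * ‖(1 - p) x‖ :=
    calc ‖q ((1 - p) x)‖ = ‖(q * (1 - p)) ((1 - p) x)‖ := by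
          rw [mul_apply_eq_comp, ← mul_apply_eq_comp (1 - p), hp.one_sub.1.eq]
      _ ≤ c * ‖(1 - p) x‖ := by grw [le_opNorm, hqp]
  have : ‖(p - q) x‖ * ‖(p - q) x‖ ≤ (c * ‖x‖) * (c * ‖x‖) :=
    calc _ ≤ (c * ‖p x‖) * (c * ‖p x‖) + (c * ‖(1 - p) x‖) * (c * ‖(1 - p) x‖) := by
          rw [hpqx]
          exact add_le_add (mul_self_le_mul_self (norm_nonneg _) h₁)
            (mul_self_le_mul_self (norm_nonneg _) h₂)
      _ = (c * ‖x‖) * (c * ‖x‖) := by linear_combination (-(c * c)) * hx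
  exact (mul_self_le_mul_self_iff (norm_nonneg _) (by positivity)).mpr this

end ContinuousLinearMap

namespace Matrix

variable {R l m n ι : Type*} [Fintype l] [Fintype m] [Fintype n] [Fintype ι]

lemma dotProduct_mulVec_eq_transpose_mulVec_dotProduct [CommSemiring R] (M : Matrix m n R)
    (x : m → R) (y : n → R) : x ⬝ᵥ (M *ᵥ y) = (Mᵀ *ᵥ x) ⬝ᵥ y := by
  rw [dotProduct_mulVec, ← mulVec_transpose]

lemma dotProduct_diagonal_mulVec_le [CommRing R] [LinearOrder R] [IsStrictOrderedRing R]
    [DecidableEq ι] {d : ι → R} {b : R} (h : ∀ i, d i ≤ b) (x : ι → R) :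
    x ⬝ᵥ (diagonal d *ᵥ x) ≤ b * (x ⬝ᵥ x) := by
  simp only [dotProduct, mulVec_diagonal, Finset.mul_sum]
  exact Finset.sum_le_sum fun i _ => by nlinarith [h i, mul_self_nonneg (x i)]

lemma le_dotProduct_diagonal_mulVec [CommRing R] [LinearOrder R] [IsStrictOrderedRing R]
    [DecidableEq ι] {d : ι → R} {a : R} (h : ∀ i, a ≤ d i) (x : ι → R) :
    a * (x ⬝ᵥ x) ≤ x ⬝ᵥ (diagonal d *ᵥ x) := by
  simp only [dotProduct, mulVec_diagonal, Finset.mul_sum]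
  exact Finset.sum_le_sum fun i _ => by nlinarith [h i, mul_self_nonneg (x i)]

lemma l2_opNorm_transpose [DecidableEq m] [DecidableEq n] (M : Matrix m n ℝ) : ‖Mᵀ‖ = ‖M‖ := by
  rw [← conjTranspose_eq_transpose_of_trivial, l2_opNorm_conjTranspose]

lemma l2_opNorm_transpose_mul_self [DecidableEq n] (M : Matrix m n ℝ) :
    ‖Mᵀ * M‖ = ‖M‖ * ‖M‖ := by
  rw [← conjTranspose_eq_transpose_of_trivial, l2_opNorm_conjTranspose_mul_self]

lemma l2_opNorm_one_le [DecidableEq ι] : ‖(1 : Matrix ι ι ℝ)‖ ≤ 1 := by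
  rw [← diagonal_one, l2_opNorm_diagonal]
  exact pi_norm_le_iff_of_nonneg zero_le_one |>.mpr fun _ => by simp

lemma l2_opNorm_le_one_of_transpose_mul_self [DecidableEq m] [DecidableEq n] {U : Matrix m n ℝ}
    (hU : Uᵀ * U = 1) : ‖U‖ ≤ 1 := by
  have h : ‖U‖ * ‖U‖ ≤ 1 := by rw [← l2_opNorm_transpose_mul_self, hU]; exact l2_opNorm_one_le
  nlinarith [norm_nonneg U]

lemma l2_opNorm_mul_of_transpose_mul_self [DecidableEq l] [DecidableEq n] {U : Matrix m n ℝ}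
    (hU : Uᵀ * U = 1) (X : Matrix n l ℝ) : ‖U * X‖ = ‖X‖ := by
  have h : ‖U * X‖ * ‖U * X‖ = ‖X‖ * ‖X‖ := by
    rw [← l2_opNorm_transpose_mul_self, ← l2_opNorm_transpose_mul_self, transpose_mul,
      Matrix.mul_assoc, ← Matrix.mul_assoc Uᵀ, hU, Matrix.one_mul]
  exact mul_self_inj (norm_nonneg _) (norm_nonneg _) |>.mp h

lemma l2_opNorm_mul_transpose_of_transpose_mul_self [DecidableEq l] [DecidableEq m]
    [DecidableEq n] {U : Matrix m n ℝ} (hU : Uᵀ * U = 1) (X : Matrix l n ℝ) :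
    ‖X * Uᵀ‖ = ‖X‖ := by
  rw [← l2_opNorm_transpose, transpose_mul, transpose_transpose,
    l2_opNorm_mul_of_transpose_mul_self hU, l2_opNorm_transpose]

lemma dotProduct_mulVec_le_l2_opNorm_mul [DecidableEq ι] (M : Matrix ι ι ℝ) (x : ι → ℝ) :
    x ⬝ᵥ (M *ᵥ x) ≤ ‖M‖ * (x ⬝ᵥ x) := by
  have hx : x ⬝ᵥ x = ‖WithLp.toLp 2 x‖ ^ 2 := by
    rw [← real_inner_self_eq_norm_sq, EuclideanSpace.inner_toLp_toLp, star_trivial]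
  rw [← inner_toEuclideanCLM, hx]
  calc _ ≤ ‖WithLp.toLp 2 x‖ * ‖toEuclideanCLM (𝕜 := ℝ) M (WithLp.toLp 2 x)‖ :=
        real_inner_le_norm _ _
    _ ≤ ‖WithLp.toLp 2 x‖ * (‖M‖ * ‖WithLp.toLp 2 x‖) := by
        gcongr; exact ContinuousLinearMap.le_opNorm _ _
    _ = _ := by ring

lemma nnnorm_eq_spectralRadius_of_transpose_eq [DecidableEq ι] {H : Matrix ι ι ℝ}
    (hH : Hᵀ = H) : (‖H‖₊ : ℝ≥0∞) = spectralRadius ℝ H := by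
  have hsa : IsSelfAdjoint (toEuclideanCLM (𝕜 := ℝ) (n := ι) H) := by
    refine IsSelfAdjoint.map ?_ _
    rwa [IsSelfAdjoint, star_eq_conjTranspose, conjTranspose_eq_transpose_of_trivial]
  rw [cstar_nnnorm_def, ← ContinuousLinearMap.spectralRadius_eq_nnnorm _ hsa, spectralRadius,
    spectralRadius, AlgEquiv.spectrum_eq (toEuclideanCLM (𝕜 := ℝ) (n := ι))]

/-- `BᵀB` and `BBᵀ` have the same characteristic polynomial, so both sides are the spectral
radius of matrices with the same spectrum. -/
lemma l2_opNorm_one_sub_transpose_mul_self [DecidableEq ι] (B : Matrix ι ι ℝ) :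
    ‖1 - Bᵀ * B‖ = ‖1 - B * Bᵀ‖ := by
  have hspec : spectrum ℝ (1 - Bᵀ * B) = spectrum ℝ (1 - B * Bᵀ) := by
    have h : spectrum ℝ (Bᵀ * B) = spectrum ℝ (B * Bᵀ) := by
      ext r; simp only [mem_spectrum_iff_isRoot_charpoly, charpoly_mul_comm]
    rw [← map_one (algebraMap ℝ (Matrix ι ι ℝ)), ← spectrum.singleton_sub_eq,
      ← spectrum.singleton_sub_eq, h]
  have hsymm (M : Matrix ι ι ℝ) : (1 - Mᵀ * M)ᵀ = 1 - Mᵀ * M := by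
    simp [transpose_sub, transpose_mul]
  have h₁ := nnnorm_eq_spectralRadius_of_transpose_eq (hsymm B)
  have h₂ := nnnorm_eq_spectralRadius_of_transpose_eq (hsymm Bᵀ)
  rw [transpose_transpose] at h₂
  rw [spectralRadius, hspec, ← spectralRadius, ← h₂, ENNReal.coe_inj] at h₁
  exact congrArg NNReal.toReal h₁

lemma exists_mulVec_transpose_mul_self_eq_l2_opNorm_sq_smul [DecidableEq n] {X : Matrix m n ℝ}
    (hX : X ≠ 0) : ∃ u : n → ℝ, u ≠ 0 ∧ (Xᵀ * X) *ᵥ u = ‖X‖ ^ 2 • u := by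
  have hpsd := posSemidef_conjTranspose_mul_self X
  rw [conjTranspose_eq_transpose_of_trivial] at hpsd
  have : Nonempty n := by
    by_contra h
    exact hX (ext fun _ j => (h ⟨j⟩).elim)
  -- The spectral radius `‖XᵀX‖ = ‖X‖²` is attained at an eigenvalue, which is `≥ 0`.
  obtain ⟨μ, hμ, hμnorm⟩ := spectrum.exists_nnnorm_eq_spectralRadius_of_nonempty
    ⟨_, hpsd.isHermitian.eigenvalues_mem_spectrum_real (Classical.arbitrary n)⟩
  rw [← nnnorm_eq_spectralRadius_of_transpose_eq (by rw [transpose_mul, transpose_transpose]),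
    ENNReal.coe_inj] at hμnorm
  rw [hpsd.isHermitian.spectrum_real_eq_range_eigenvalues] at hμ
  obtain ⟨i, rfl⟩ := hμ
  refine ⟨hpsd.isHermitian.eigenvectorBasis i, fun h => ?_, ?_⟩
  · simpa using congrArg (‖·‖) (congrArg (WithLp.toLp 2) h)
  · rw [hpsd.isHermitian.mulVec_eigenvectorBasis, sq, ← l2_opNorm_transpose_mul_self]
    congr 1
    simpa [abs_of_nonneg (hpsd.eigenvalues_nonneg i)] using congrArg NNReal.toReal hμnorm

/-- Test `X D₁ - D₂ X` between a top right singular vector `u` of `X` and `X u`. -/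
lemma sub_mul_l2_opNorm_le_l2_opNorm_mul_diagonal_sub [DecidableEq m] [DecidableEq n]
    {X : Matrix m n ℝ} {d₁ : n → ℝ} {d₂ : m → ℝ} {a b : ℝ} (h₁ : ∀ j, a ≤ d₁ j)
    (h₂ : ∀ i, d₂ i ≤ b) : (a - b) * ‖X‖ ≤ ‖X * diagonal d₁ - diagonal d₂ * X‖ := by
  rcases eq_or_ne X 0 with rfl | hX
  · simp
  obtain ⟨u, hu0, hu⟩ := exists_mulVec_transpose_mul_self_eq_l2_opNorm_sq_smul hX
  set S := X * diagonal d₁ - diagonal d₂ * X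
  have hX₀ : 0 < ‖X‖ := norm_pos_iff.mpr hX
  have hu₀ : 0 < u ⬝ᵥ u := by simpa using dotProduct_star_self_pos_iff.mpr hu0
  have hXu : (X *ᵥ u) ⬝ᵥ (X *ᵥ u) = ‖X‖ ^ 2 * (u ⬝ᵥ u) := by
    rw [dotProduct_mulVec_eq_transpose_mulVec_dotProduct, mulVec_mulVec, hu, smul_dotProduct,
      smul_eq_mul]
  have hform : u ⬝ᵥ ((Xᵀ * S) *ᵥ u) =
      ‖X‖ ^ 2 * (u ⬝ᵥ (diagonal d₁ *ᵥ u)) - (X *ᵥ u) ⬝ᵥ (diagonal d₂ *ᵥ (X *ᵥ u)) := by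
    rw [Matrix.mul_sub, sub_mulVec, dotProduct_sub, ← Matrix.mul_assoc, ← mulVec_mulVec,
      dotProduct_mulVec_eq_transpose_mulVec_dotProduct, transpose_mul, transpose_transpose, hu,
      smul_dotProduct, smul_eq_mul, ← mulVec_mulVec, ← mulVec_mulVec,
      dotProduct_mulVec_eq_transpose_mulVec_dotProduct Xᵀ, transpose_transpose]
  have hupper : u ⬝ᵥ ((Xᵀ * S) *ᵥ u) ≤ ‖X‖ * ‖S‖ * (u ⬝ᵥ u) := by
    refine (dotProduct_mulVec_le_l2_opNorm_mul _ u).trans ?_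
    gcongr
    rw [← l2_opNorm_transpose X]
    exact l2_opNorm_mul _ _
  have hd₁ := le_dotProduct_diagonal_mulVec h₁ u
  have hd₂ := dotProduct_diagonal_mulVec_le h₂ (X *ᵥ u)
  rw [hXu] at hd₂
  have : ‖X‖ * ((a - b) * ‖X‖ * (u ⬝ᵥ u)) ≤ ‖X‖ * (‖S‖ * (u ⬝ᵥ u)) := by nlinarith
  exact le_of_mul_le_mul_right (le_of_mul_le_mul_left this hX₀) hu₀

lemma isStarProjection_mul_transpose [DecidableEq m] [DecidableEq n] {U : Matrix m n ℝ}
    (hU : Uᵀ * U = 1) : IsStarProjection (U * Uᵀ) where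
  isIdempotentElem := by
    rw [IsIdempotentElem, Matrix.mul_assoc, ← Matrix.mul_assoc Uᵀ, hU, Matrix.one_mul]
  isSelfAdjoint := by
    rw [IsSelfAdjoint, star_eq_conjTranspose, conjTranspose_eq_transpose_of_trivial,
      transpose_mul, transpose_transpose]

lemma l2_opNorm_sub_le_max_of_isStarProjection [DecidableEq ι] {P Q : Matrix ι ι ℝ}
    (hP : IsStarProjection P) (hQ : IsStarProjection Q) :
    ‖P - Q‖ ≤ max ‖(1 - Q) * P‖ ‖(1 - P) * Q‖ := by
  simpa only [cstar_norm_def, map_sub, map_mul, map_one] using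
    ContinuousLinearMap.norm_sub_le_max_of_isStarProjection
      (hP.map (toEuclideanCLM (𝕜 := ℝ) (n := ι))) (hQ.map (toEuclideanCLM (𝕜 := ℝ) (n := ι)))

/-- Both sides squared are `‖1 - BᵀB‖` and `‖1 - BBᵀ‖` for the square matrix `B = WᵀU`: this is
where the two ranges having the same dimension enters. -/
lemma l2_opNorm_one_sub_mul_transpose_mul_comm [DecidableEq l] [DecidableEq m]
    {U W : Matrix m l ℝ} (hU : Uᵀ * U = 1) (hW : Wᵀ * W = 1) :
    ‖(1 - W * Wᵀ) * (U * Uᵀ)‖ = ‖(1 - U * Uᵀ) * (W * Wᵀ)‖ := by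
  have key {U W : Matrix m l ℝ} (hU : Uᵀ * U = 1) (hW : Wᵀ * W = 1) :
      ‖(1 - W * Wᵀ) * (U * Uᵀ)‖ * ‖(1 - W * Wᵀ) * (U * Uᵀ)‖ = ‖1 - (Wᵀ * U)ᵀ * (Wᵀ * U)‖ := by
    have hsymm : (1 - W * Wᵀ)ᵀ = 1 - W * Wᵀ := by simp
    rw [← Matrix.mul_assoc, l2_opNorm_mul_transpose_of_transpose_mul_self hU,
      ← l2_opNorm_transpose_mul_self, transpose_mul, hsymm, Matrix.mul_assoc,
      ← Matrix.mul_assoc (1 - W * Wᵀ), (isStarProjection_mul_transpose hW).one_sub.1.eq,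
      Matrix.sub_mul, Matrix.one_mul, Matrix.mul_sub, hU]
    simp only [transpose_mul, transpose_transpose, Matrix.mul_assoc]
  have h := key hW hU
  rw [show Uᵀ * W = (Wᵀ * U)ᵀ by rw [transpose_mul, transpose_transpose], transpose_transpose,
    ← l2_opNorm_one_sub_transpose_mul_self, ← key hU hW] at h
  exact mul_self_inj (norm_nonneg _) (norm_nonneg _) |>.mp h.symm

lemma transpose_eq_of_eq_mul_diagonal_mul_transpose [DecidableEq n] {A V : Matrix n n ℝ}
    {d : n → ℝ} (hA : A = V * diagonal d * Vᵀ) : Aᵀ = A := by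
  rw [hA, transpose_mul, transpose_mul, transpose_transpose, diagonal_transpose, Matrix.mul_assoc]

lemma mul_submatrix_eq_submatrix_mul_diagonal [DecidableEq l] [DecidableEq n] {A V : Matrix n n ℝ}
    {d : n → ℝ} (hV : Vᵀ * V = 1) (hA : A = V * diagonal d * Vᵀ) (f : l → n) :
    A * V.submatrix id f = V.submatrix id f * diagonal (d ∘ f) := by
  have hAV : A * V = V * diagonal d := by
    rw [hA, Matrix.mul_assoc, Matrix.mul_assoc, hV, Matrix.mul_one]
  rw [← submatrix_id_id A, ← submatrix_mul _ _ _ _ _ Function.bijective_id, hAV]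
  ext i j
  simp [mul_diagonal]

lemma transpose_submatrix_mul_sub_mul_submatrix [DecidableEq l] [DecidableEq m] [DecidableEq n]
    {A B V W : Matrix n n ℝ} {d e : n → ℝ} (hV : Vᵀ * V = 1) (hW : Wᵀ * W = 1)
    (hA : A = V * diagonal d * Vᵀ) (hB : B = W * diagonal e * Wᵀ) (f : l → n) (g : m → n) :
    (W.submatrix id g)ᵀ * (A - B) * V.submatrix id f =
      (W.submatrix id g)ᵀ * V.submatrix id f * diagonal (d ∘ f) -
        diagonal (e ∘ g) * ((W.submatrix id g)ᵀ * V.submatrix id f) := by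
  have hWB : (W.submatrix id g)ᵀ * B = diagonal (e ∘ g) * (W.submatrix id g)ᵀ := by
    have := congrArg transpose (mul_submatrix_eq_submatrix_mul_diagonal hW hB g)
    rwa [transpose_mul, transpose_mul, transpose_eq_of_eq_mul_diagonal_mul_transpose hB,
      diagonal_transpose] at this
  rw [Matrix.mul_sub, Matrix.sub_mul, Matrix.mul_assoc,
    mul_submatrix_eq_submatrix_mul_diagonal hV hA, hWB, Matrix.mul_assoc, Matrix.mul_assoc]

end Matrix

lemma Matrix.transpose_submatrix_mul_submatrix_eq_one {l m n : Type*} [Fintype m] [DecidableEq l]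
    [DecidableEq n] {V : Matrix m n ℝ} (hV : Vᵀ * V = 1) {f : l → n} (hf : Function.Injective f) :
    (V.submatrix id f)ᵀ * V.submatrix id f = 1 := by
  rw [transpose_submatrix, ← submatrix_mul _ _ _ _ _ Function.bijective_id, hV, submatrix_one _ hf]

lemma spec_eq_l2_opNorm {m n : ℕ} (M : Matrix (Fin m) (Fin n) ℝ) : spec M = ‖M‖ := by
  rw [l2_opNorm_def]; rfl

lemma IsMP.unique {m n : ℕ} {X : Matrix (Fin m) (Fin n) ℝ} {Y Z : Matrix (Fin n) (Fin m) ℝ}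
    (hY : IsMP X Y) (hZ : IsMP X Z) : Y = Z := by
  obtain ⟨hY₁, hY₂, hY₃, hY₄⟩ := hY
  obtain ⟨hZ₁, hZ₂, hZ₃, hZ₄⟩ := hZ
  have hXY : X * Y = X * Z :=
    calc X * Y = (X * Z * X * Y)ᵀ := by rw [hZ₁, hY₃]
      _ = (X * Y)ᵀ * (X * Z)ᵀ := by rw [← transpose_mul, Matrix.mul_assoc, Matrix.mul_assoc]
      _ = X * Z := by rw [hY₃, hZ₃, ← Matrix.mul_assoc, hY₁]
  have hYX : Y * X = Z * X :=
    calc Y * X = (Y * X * Z * X)ᵀ := by rw [Matrix.mul_assoc Y X Z, Matrix.mul_assoc, hZ₁, hY₄]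
      _ = (Z * X)ᵀ * (Y * X)ᵀ := by rw [← transpose_mul, Matrix.mul_assoc]
      _ = Z * X := by rw [hY₄, hZ₄, Matrix.mul_assoc, ← Matrix.mul_assoc X, hY₁]
  rw [← hY₂, hYX, Matrix.mul_assoc, hXY, ← Matrix.mul_assoc, hZ₂]

lemma projCol_eq_mul_transpose {m n : ℕ} {U : Matrix (Fin m) (Fin n) ℝ} (hU : Uᵀ * U = 1) :
    projCol U = U * Uᵀ := by
  have hMP : IsMP U Uᵀ := by
    refine ⟨?_, ?_, ?_, ?_⟩
    · rw [Matrix.mul_assoc, hU, Matrix.mul_one]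
    · rw [hU, Matrix.one_mul]
    · rw [transpose_mul, transpose_transpose]
    · rw [hU, transpose_one]
  have hex : ∃ Y, IsMP U Y := ⟨_, hMP⟩
  rw [projCol, pinv, dif_pos hex, hex.choose_spec.unique hMP]

lemma firstCols_mul_transpose_add_tailCols_mul_transpose {m p : ℕ}
    (U : Matrix (Fin m) (Fin p) ℝ) (k : ℕ) (h : k ≤ p) :
    firstCols U k h * (firstCols U k h)ᵀ + tailCols U k h * (tailCols U k h)ᵀ = U * Uᵀ := by
  let e : Fin k ⊕ Fin (p - k) ≃ Fin p := finSumFinEquiv.trans (finCongr (by omega))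
  have hcols : fromCols (firstCols U k h) (tailCols U k h) = U.submatrix id e := by
    ext i (j | j) <;> rfl
  rw [← fromCols_mul_fromRows, ← transpose_fromCols, hcols, transpose_submatrix,
    ← submatrix_mul _ _ _ _ _ e.bijective, submatrix_id_id]

lemma davis_kahan_sin_theta {n k : ℕ} (hk : k ≤ n) {A At V W : Matrix (Fin n) (Fin n) ℝ}
    {d e : Fin n → ℝ} (hV : Vᵀ * V = 1) (hW : Wᵀ * W = 1) (hA : A = V * diagonal d * Vᵀ)
    (hAt : At = W * diagonal e * Wᵀ) {a b : ℝ} (ha : ∀ i : Fin n, i.1 < k → a ≤ d i)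
    (hb : ∀ i : Fin n, k ≤ i.1 → e i ≤ b) :
    (a - b) * ‖(1 - firstCols W k hk * (firstCols W k hk)ᵀ) *
      (firstCols V k hk * (firstCols V k hk)ᵀ)‖ ≤ ‖A - At‖ := by
  set V₁ := firstCols V k hk
  set W₁ := firstCols W k hk
  set W₂ := tailCols W k hk
  let tail : Fin (n - k) → Fin n := fun j => ⟨k + j.1, by omega⟩
  have hV₁ : V₁ᵀ * V₁ = 1 := transpose_submatrix_mul_submatrix_eq_one hV (Fin.castLE_injective hk)
  have hW₂ : W₂ᵀ * W₂ = 1 := transpose_submatrix_mul_submatrix_eq_one hW (f := tail)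
    fun i j h => by ext; simpa [tail] using congrArg Fin.val h
  have hcompl : 1 - W₁ * W₁ᵀ = W₂ * W₂ᵀ := by
    rw [← mul_eq_one_comm.mp hW, ← firstCols_mul_transpose_add_tailCols_mul_transpose W k hk,
      add_sub_cancel_left]
  have hsylvester : W₂ᵀ * (A - At) * V₁ =
      W₂ᵀ * V₁ * diagonal (d ∘ Fin.castLE hk) - diagonal (e ∘ tail) * (W₂ᵀ * V₁) :=
    transpose_submatrix_mul_sub_mul_submatrix hV hW hA hAt _ _
  calc (a - b) * ‖(1 - W₁ * W₁ᵀ) * (V₁ * V₁ᵀ)‖ = (a - b) * ‖W₂ᵀ * V₁‖ := by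
        rw [hcompl, show W₂ * W₂ᵀ * (V₁ * V₁ᵀ) = W₂ * (W₂ᵀ * V₁) * V₁ᵀ by
          simp only [Matrix.mul_assoc], l2_opNorm_mul_transpose_of_transpose_mul_self hV₁,
          l2_opNorm_mul_of_transpose_mul_self hW₂]
    _ ≤ ‖W₂ᵀ * (A - At) * V₁‖ := by
        rw [hsylvester]
        exact sub_mul_l2_opNorm_le_l2_opNorm_mul_diagonal_sub (fun j => ha _ j.2)
          fun i => hb _ (Nat.le_add_right _ _)
    _ ≤ ‖W₂ᵀ‖ * ‖A - At‖ * ‖V₁‖ :=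
        (l2_opNorm_mul _ _).trans (by gcongr; exact l2_opNorm_mul _ _)
    _ ≤ 1 * ‖A - At‖ * 1 := by
        gcongr
        · rw [l2_opNorm_transpose]; exact l2_opNorm_le_one_of_transpose_mul_self hW₂
        · exact l2_opNorm_le_one_of_transpose_mul_self hV₁
    _ = ‖A - At‖ := by ring

/-- Corollary of the Davis–Kahan sin Θ theorem.
If `A, Ã` are symmetric `n×n` matrices of rank at least `k`, with eigenvalues listed in
nonincreasing order via orthogonal eigendecompositions, and `λ_k(A) > λ̃_{k+1}(Ã)`, then
`d₂(V_{A,k}, V_{Ã,k}) ≤ ‖A − Ã‖₂ / (λ_k − λ̃_{k+1})`. -/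
theorem statement0
    (n k : ℕ) (hkn : k < n)
    (A At : Matrix (Fin n) (Fin n) ℝ)
    (VA VAt : Matrix (Fin n) (Fin n) ℝ) (lamA lamAt : Fin n → ℝ)
    (hVA : VAᵀ * VA = 1) (hVAt : VAtᵀ * VAt = 1)
    (hlamA : Antitone lamA) (hlamAt : Antitone lamAt)
    (hdecA : A = VA * Matrix.diagonal lamA * VAᵀ)
    (hdecAt : At = VAt * Matrix.diagonal lamAt * VAtᵀ)
    (hgap : lamAt ⟨k, hkn⟩ < lamA ⟨k - 1, by omega⟩) :
    d2 (firstCols VA k hkn.le) (firstCols VAt k hkn.le)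
      ≤ spec (A - At) / (lamA ⟨k - 1, by omega⟩ - lamAt ⟨k, hkn⟩) := by
  set V₁ := firstCols VA k hkn.le
  set W₁ := firstCols VAt k hkn.le
  have hV₁ : V₁ᵀ * V₁ = 1 := transpose_submatrix_mul_submatrix_eq_one hVA (Fin.castLE_injective _)
  have hW₁ : W₁ᵀ * W₁ = 1 :=
    transpose_submatrix_mul_submatrix_eq_one hVAt (Fin.castLE_injective _)
  have hproj := l2_opNorm_sub_le_max_of_isStarProjection (isStarProjection_mul_transpose hV₁)
    (isStarProjection_mul_transpose hW₁)
  rw [← l2_opNorm_one_sub_mul_transpose_mul_comm hV₁ hW₁, max_self] at hproj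
  have hsin := davis_kahan_sin_theta hkn.le hVA hVAt hdecA hdecAt
    (a := lamA ⟨k - 1, by omega⟩) (b := lamAt ⟨k, hkn⟩)
    (fun i hi => hlamA (Fin.le_def.2 (by simp only; omega))) (fun i hi => hlamAt (Fin.le_def.2 hi))
  rw [d2, projCol_eq_mul_transpose hV₁, projCol_eq_mul_transpose hW₁, spec_eq_l2_opNorm,
    spec_eq_l2_opNorm, le_div_iff₀ (sub_pos.2 hgap)]
  calc _ ≤ ‖(1 - W₁ * W₁ᵀ) * (V₁ * V₁ᵀ)‖ * (lamA ⟨k - 1, by omega⟩ - lamAt ⟨k, hkn⟩) := by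
        gcongr
    _ ≤ ‖A - At‖ := by rw [mul_comm]; exact hsin
end

section
/- Let A ∈ ℝ^{n×d}, b ∈ ℝ^n, k ≤ rank(A) with σ_k(A) > σ_{k+1}(A), and let R ∈ ℝ^{d×s} with s ≥ k and rank(AR) ≥ k. Let ν ∈ (0,1). If d₂(U_{AR,k}, U_{A,k}) ≤ ν, then A·x_{R,k} is a (ν, ν)-approximate PCP of rank k. -/
open Matrix MeasureTheory

noncomputable section

/-- The PCR solution for the thin-SVD right factor `VA`: `x_k = V_{A,k}(A V_{A,k})⁺ b`. -/
def pcrSol {n d p k : ℕ} (A : Matrix (Fin n) (Fin d) ℝ) (b : Fin n → ℝ)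
    (VA : Matrix (Fin d) (Fin p) ℝ) (hk : k ≤ p) : Fin d → ℝ :=
  (firstCols VA k hk * pinv (A * firstCols VA k hk)).mulVec b

/-- `x̃` is an `(ε, υ)`-approximate PCR of rank `k` (relative to the thin SVD right factor
`VA` of `A`): `| ‖A x̃ − b‖ − ‖A x_k − b‖ | ≤ ε ‖b‖` and `‖V_{A,k+}ᵀ x̃‖ ≤ υ ‖b‖`. -/
def IsApproxPCR {n d p k : ℕ} (A : Matrix (Fin n) (Fin d) ℝ) (b : Fin n → ℝ)
    (VA : Matrix (Fin d) (Fin p) ℝ) (hk : k ≤ p) (ε υ : ℝ) (xt : Fin d → ℝ) : Prop :=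
  |vnorm (A.mulVec xt - b) - vnorm (A.mulVec (pcrSol A b VA hk) - b)| ≤ ε * vnorm b ∧
  vnorm ((tailCols VA k hk)ᵀ.mulVec xt) ≤ υ * vnorm b

/-- `b̃` is an `(ε, υ)`-approximate PCP of rank `k` (relative to a thin SVD `(UA, ·, VA)`
of `A`): `| ‖b̃ − b‖ − ‖b_k − b‖ | ≤ ε ‖b‖` and `‖U_{A,k+}ᵀ b̃‖ ≤ υ ‖b‖`, where
`b_k = A x_k` is the PCP solution. -/
def IsApproxPCP {n d p k : ℕ} (A : Matrix (Fin n) (Fin d) ℝ) (b : Fin n → ℝ)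
    (UA : Matrix (Fin n) (Fin p) ℝ) (VA : Matrix (Fin d) (Fin p) ℝ) (hk : k ≤ p)
    (ε υ : ℝ) (bt : Fin n → ℝ) : Prop :=
  |vnorm (bt - b) - vnorm (A.mulVec (pcrSol A b VA hk) - b)| ≤ ε * vnorm b ∧
  vnorm ((tailCols UA k hk)ᵀ.mulVec bt) ≤ υ * vnorm b

end

/-!
For a thin SVD `X = U Σ Vᵀ` and `k ≤ rank X` the first `k` singular values are positive, so
`X V_{X,k} = U_{X,k} Σ_k` with `Σ_k` invertible, and `X V_{X,k} (X V_{X,k})⁺ = U_{X,k} U_{X,k}ᵀ`.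
Applied to `A` and to `AR`, this gives `b_k = P_A b` and `A x_{R,k} = P_{AR} b` for the
projections `P_A = P_{U_{A,k}}`, `P_{AR} = P_{U_{AR,k}}`. Both conditions then follow from
`‖(P_{AR} − P_A) b‖ ≤ ν ‖b‖`: the first by the reverse triangle inequality, the second because
`U_{A,k+}ᵀ P_A = 0`.
-/

section EuclideanNorm

variable {m n : ℕ}

theorem vnorm_eq_norm (v : Fin n → ℝ) : vnorm v = ‖WithLp.toLp 2 v‖ := by
  simp [EuclideanSpace.norm_eq, vnorm, Real.norm_eq_abs, sq_abs]

theorem vnorm_nonneg (v : Fin n → ℝ) : 0 ≤ vnorm v := Real.sqrt_nonneg _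

theorem vnorm_sq (v : Fin n → ℝ) : vnorm v ^ 2 = v ⬝ᵥ v := by
  rw [vnorm, Real.sq_sqrt (Finset.sum_nonneg fun i _ => sq_nonneg _)]
  simp [dotProduct, sq]

theorem dotProduct_le_vnorm_mul_vnorm (v w : Fin n → ℝ) : v ⬝ᵥ w ≤ vnorm v * vnorm w := by
  have h := real_inner_le_norm (WithLp.toLp 2 v) (WithLp.toLp 2 w)
  rwa [← vnorm_eq_norm, ← vnorm_eq_norm, EuclideanSpace.inner_eq_star_dotProduct, star_trivial,
    dotProduct_comm] at h

theorem abs_vnorm_sub_vnorm_le (v w : Fin n → ℝ) : |vnorm v - vnorm w| ≤ vnorm (v - w) := by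
  simpa only [vnorm_eq_norm, WithLp.toLp_sub] using abs_norm_sub_norm_le _ _

theorem vnorm_mulVec_le_spec (M : Matrix (Fin m) (Fin n) ℝ) (v : Fin n → ℝ) :
    vnorm (M *ᵥ v) ≤ spec M * vnorm v := by
  rw [vnorm_eq_norm, vnorm_eq_norm]
  exact (LinearMap.toContinuousLinearMap (Matrix.toEuclideanLin M)).le_opNorm _

theorem vnorm_mulVec_of_orthonormal {W : Matrix (Fin m) (Fin n) ℝ} (hW : Wᵀ * W = 1)
    (v : Fin n → ℝ) : vnorm (W *ᵥ v) = vnorm v := by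
  have h : (W *ᵥ v) ⬝ᵥ (W *ᵥ v) = v ⬝ᵥ v := by
    rw [dotProduct_mulVec, vecMul_mulVec, hW, vecMul_one]
  rw [← sq_eq_sq₀ (vnorm_nonneg _) (vnorm_nonneg _), vnorm_sq, vnorm_sq, h]

theorem vnorm_transpose_mulVec_le {W : Matrix (Fin m) (Fin n) ℝ} (hW : Wᵀ * W = 1)
    (v : Fin m → ℝ) : vnorm (Wᵀ *ᵥ v) ≤ vnorm v := by
  have h : vnorm (Wᵀ *ᵥ v) ^ 2 ≤ vnorm v * vnorm (Wᵀ *ᵥ v) := by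
    calc vnorm (Wᵀ *ᵥ v) ^ 2 = v ⬝ᵥ (W *ᵥ (Wᵀ *ᵥ v)) := by
          rw [vnorm_sq, dotProduct_mulVec, vecMul_transpose, dotProduct_comm]
      _ ≤ vnorm v * vnorm (Wᵀ *ᵥ v) := by
          rw [← vnorm_mulVec_of_orthonormal hW (Wᵀ *ᵥ v)]
          exact dotProduct_le_vnorm_mul_vnorm _ _
  nlinarith [vnorm_nonneg (Wᵀ *ᵥ v), vnorm_nonneg v]

end EuclideanNorm

section Pseudoinverse

variable {m n k : ℕ}

theorem IsMP.mul_eq_mul {X : Matrix (Fin m) (Fin n) ℝ} {Y Z : Matrix (Fin n) (Fin m) ℝ}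
    (hY : IsMP X Y) (hZ : IsMP X Z) : X * Y = X * Z := by
  obtain ⟨hY1, -, hY3, -⟩ := hY
  obtain ⟨hZ1, -, hZ3, -⟩ := hZ
  calc X * Y = (X * Z * X) * Y := by rw [hZ1]
    _ = ((X * Y)ᵀ * (X * Z)ᵀ)ᵀ := by
        rw [transpose_mul, transpose_transpose, transpose_transpose, Matrix.mul_assoc]
    _ = (X * Y * X * Z)ᵀ := by rw [hY3, hZ3, Matrix.mul_assoc (X * Y)]
    _ = X * Z := by rw [hY1, hZ3]

theorem projCol_eq_of_isMP {X : Matrix (Fin m) (Fin n) ℝ} {Y : Matrix (Fin n) (Fin m) ℝ}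
    (hY : IsMP X Y) : projCol X = X * Y := by
  have hex : ∃ Y, IsMP X Y := ⟨Y, hY⟩
  rw [projCol, pinv, dif_pos hex]
  exact hex.choose_spec.mul_eq_mul hY

theorem isMP_mul_of_orthonormal {U : Matrix (Fin m) (Fin k) ℝ} {D : Matrix (Fin k) (Fin k) ℝ}
    (hU : Uᵀ * U = 1) (hD : IsUnit D.det) : IsMP (U * D) (D⁻¹ * Uᵀ) := by
  have hXY : U * D * (D⁻¹ * Uᵀ) = U * Uᵀ := by
    rw [Matrix.mul_assoc, ← Matrix.mul_assoc D, mul_nonsing_inv D hD, Matrix.one_mul]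
  have hYX : D⁻¹ * Uᵀ * (U * D) = 1 := by
    rw [Matrix.mul_assoc, ← Matrix.mul_assoc Uᵀ, hU, Matrix.one_mul, nonsing_inv_mul D hD]
  refine ⟨?_, ?_, ?_, ?_⟩
  · rw [Matrix.mul_assoc, hYX, Matrix.mul_one]
  · rw [hYX, Matrix.one_mul]
  · rw [hXY, transpose_mul, transpose_transpose]
  · rw [hYX, transpose_one]

theorem projCol_mul_of_orthonormal {U : Matrix (Fin m) (Fin k) ℝ} {D : Matrix (Fin k) (Fin k) ℝ}
    (hU : Uᵀ * U = 1) (hD : IsUnit D.det) : projCol (U * D) = U * Uᵀ := by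
  rw [projCol_eq_of_isMP (isMP_mul_of_orthonormal hU hD), Matrix.mul_assoc,
    ← Matrix.mul_assoc D, mul_nonsing_inv D hD, Matrix.one_mul]

theorem projCol_of_orthonormal {U : Matrix (Fin m) (Fin k) ℝ} (hU : Uᵀ * U = 1) :
    projCol U = U * Uᵀ := by
  simpa using projCol_mul_of_orthonormal hU (D := 1) (by simp)

end Pseudoinverse

section Columns

variable {m p k : ℕ} {U : Matrix (Fin m) (Fin p) ℝ}

theorem transpose_submatrix_mul_submatrix {a b : ℕ} (f : Fin a → Fin p) (g : Fin b → Fin p) :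
    (U.submatrix id f)ᵀ * U.submatrix id g = (Uᵀ * U).submatrix f g := by
  rw [transpose_submatrix, submatrix_mul _ _ _ _ _ Function.bijective_id]

theorem firstCols_orthonormal (hU : Uᵀ * U = 1) (hk : k ≤ p) :
    (firstCols U k hk)ᵀ * firstCols U k hk = 1 := by
  rw [firstCols, transpose_submatrix_mul_submatrix, hU, submatrix_one _ (Fin.castLE_injective hk)]

theorem tailCols_orthonormal (hU : Uᵀ * U = 1) (hk : k ≤ p) :
    (tailCols U k hk)ᵀ * tailCols U k hk = 1 := by
  rw [tailCols, transpose_submatrix_mul_submatrix, hU, submatrix_one]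
  intro i j hij
  simpa [Fin.ext_iff] using hij

theorem tailCols_transpose_mul_firstCols (hU : Uᵀ * U = 1) (hk : k ≤ p) :
    (tailCols U k hk)ᵀ * firstCols U k hk = 0 := by
  ext i j
  rw [tailCols, firstCols, transpose_submatrix_mul_submatrix, hU]
  simp only [submatrix_apply, one_apply, Fin.ext_iff, Fin.val_castLE, Matrix.zero_apply,
    ite_eq_right_iff, one_ne_zero, imp_false]
  omega

end Columns

namespace IsThinSVD

variable {m n p k : ℕ} {X : Matrix (Fin m) (Fin n) ℝ} {U : Matrix (Fin m) (Fin p) ℝ}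
  {s : Fin p → ℝ} {V : Matrix (Fin n) (Fin p) ℝ}

theorem mul_firstCols (h : IsThinSVD X U s V) (hk : k ≤ p) :
    X * firstCols V k hk = firstCols U k hk * diagonal (fun i => s (Fin.castLE hk i)) := by
  obtain ⟨-, hV, -, -, rfl⟩ := h
  have hVk :
      Vᵀ * firstCols V k hk = (1 : Matrix (Fin p) (Fin p) ℝ).submatrix id (Fin.castLE hk) := by
    rw [← submatrix_id_id Vᵀ, ← transpose_submatrix, firstCols, transpose_submatrix_mul_submatrix,
      hV]
  rw [Matrix.mul_assoc, hVk]
  ext i j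
  rw [mul_diagonal, mul_apply]
  simp [firstCols, one_apply]

theorem pos_of_lt_rank (h : IsThinSVD X U s V) (i : Fin p) (hi : (i : ℕ) < X.rank) : 0 < s i := by
  obtain ⟨-, -, hmono, hpos, rfl⟩ := h
  refine (hpos i).lt_of_ne' fun hzero => hi.not_ge ?_
  have hsupp : ({j | s j ≠ 0} : Finset (Fin p)) ⊆ Finset.Iio i := by
    intro j hj
    simp only [Finset.mem_filter, Finset.mem_univ, true_and, Finset.mem_Iio] at hj ⊢
    by_contra hij
    exact hj (le_antisymm (hzero ▸ hmono (not_lt.mp hij)) (hpos j))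
  calc (U * diagonal s * Vᵀ).rank ≤ (diagonal s).rank :=
        (rank_mul_le_left _ _).trans (rank_mul_le_right _ _)
    _ = ({j | s j ≠ 0} : Finset (Fin p)).card := by rw [rank_diagonal, Fintype.card_subtype]
    _ ≤ i := (Finset.card_le_card hsupp).trans_eq (Fin.card_Iio i)

theorem projCol_mul_firstCols (h : IsThinSVD X U s V) (hk : k ≤ p) (hrank : k ≤ X.rank) :
    projCol (X * firstCols V k hk) = projCol (firstCols U k hk) := by
  have hUk := firstCols_orthonormal h.1 hk
  have hsk : IsUnit (diagonal fun i : Fin k => s (Fin.castLE hk i)).det := by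
    rw [det_diagonal, isUnit_iff_ne_zero, Finset.prod_ne_zero_iff]
    exact fun i _ => (h.pos_of_lt_rank _ (by rw [Fin.val_castLE]; omega)).ne'
  rw [h.mul_firstCols hk, projCol_mul_of_orthonormal hUk hsk, projCol_of_orthonormal hUk]

end IsThinSVD

theorem isApproxPCP_mulVec_of_spec_sub_le {n d p k : ℕ} {A : Matrix (Fin n) (Fin d) ℝ}
    {b : Fin n → ℝ} {UA : Matrix (Fin n) (Fin p) ℝ} {VA : Matrix (Fin d) (Fin p) ℝ} (hk : k ≤ p)
    (hUA : UAᵀ * UA = 1) (hbk : A *ᵥ pcrSol A b VA hk = projCol (firstCols UA k hk) *ᵥ b)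
    {P : Matrix (Fin n) (Fin n) ℝ} {ν : ℝ} (hP : spec (P - projCol (firstCols UA k hk)) ≤ ν) :
    IsApproxPCP A b UA VA hk ν ν (P *ᵥ b) := by
  have htailQ : (tailCols UA k hk)ᵀ * projCol (firstCols UA k hk) = 0 := by
    rw [projCol_of_orthonormal (firstCols_orthonormal hUA hk), ← Matrix.mul_assoc,
      tailCols_transpose_mul_firstCols hUA hk, Matrix.zero_mul]
  set Q := projCol (firstCols UA k hk)
  have hdiff : vnorm ((P - Q) *ᵥ b) ≤ ν * vnorm b :=
    (vnorm_mulVec_le_spec _ b).trans (mul_le_mul_of_nonneg_right hP (vnorm_nonneg b))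
  constructor
  · rw [hbk]
    refine (abs_vnorm_sub_vnorm_le _ _).trans (le_of_eq_of_le ?_ hdiff)
    rw [sub_mulVec, sub_sub_sub_cancel_right]
  · calc vnorm ((tailCols UA k hk)ᵀ *ᵥ (P *ᵥ b))
        = vnorm ((tailCols UA k hk)ᵀ *ᵥ ((P - Q) *ᵥ b)) := by
          rw [mulVec_mulVec, mulVec_mulVec, Matrix.mul_sub, htailQ, sub_zero]
      _ ≤ ν * vnorm b := (vnorm_transpose_mulVec_le (tailCols_orthonormal hUA hk) _).trans hdiff

theorem statement2_general
    {n d s k : ℕ}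
    (A : Matrix (Fin n) (Fin d) ℝ) (b : Fin n → ℝ)
    (UA : Matrix (Fin n) (Fin (min n d)) ℝ) (sA : Fin (min n d) → ℝ)
    (VA : Matrix (Fin d) (Fin (min n d)) ℝ)
    (hSVD : IsThinSVD A UA sA VA)
    (hkrank : k ≤ A.rank) (hkp : k ≤ min n d)
    (R : Matrix (Fin d) (Fin s) ℝ)
    (hkrankAR : k ≤ (A * R).rank) (hkq : k ≤ min n s)
    (UR : Matrix (Fin n) (Fin (min n s)) ℝ) (sR : Fin (min n s) → ℝ)
    (VR : Matrix (Fin s) (Fin (min n s)) ℝ)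
    (hSVDR : IsThinSVD (A * R) UR sR VR)
    (ν : ℝ)
    (hdist : d2 (firstCols UR k hkq) (firstCols UA k hkp) ≤ ν) :
    IsApproxPCP A b UA VA hkp ν ν
      (A.mulVec ((R * firstCols VR k hkq * pinv (A * R * firstCols VR k hkq)).mulVec b)) := by
  have hbt : A *ᵥ ((R * firstCols VR k hkq * pinv (A * R * firstCols VR k hkq)) *ᵥ b)
      = projCol (firstCols UR k hkq) *ᵥ b := by
    rw [mulVec_mulVec, ← hSVDR.projCol_mul_firstCols hkq hkrankAR, projCol, Matrix.mul_assoc A,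
      Matrix.mul_assoc A, Matrix.mul_assoc R]
  have hbk : A *ᵥ pcrSol A b VA hkp = projCol (firstCols UA k hkp) *ᵥ b := by
    rw [pcrSol, mulVec_mulVec, ← hSVD.projCol_mul_firstCols hkp hkrank, projCol,
      Matrix.mul_assoc]
  rw [hbt]
  exact isApproxPCP_mulVec_of_spec_sub_le hkp hSVD.1 hbk hdist

/-- Theorem: dimensionality reduction gives approximate PCP.
If `d₂(U_{AR,k}, U_{A,k}) ≤ ν` then `A x_{R,k}` is a `(ν, ν)`-approximate PCP of rank `k`,
where `x_{R,k} = R V_{AR,k} (A R V_{AR,k})⁺ b`. -/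
theorem statement2
    {n d s k : ℕ} (hk0 : 0 < k)
    (A : Matrix (Fin n) (Fin d) ℝ) (b : Fin n → ℝ)
    (UA : Matrix (Fin n) (Fin (min n d)) ℝ) (sA : Fin (min n d) → ℝ)
    (VA : Matrix (Fin d) (Fin (min n d)) ℝ)
    (hSVD : IsThinSVD A UA sA VA)
    (hkrank : k ≤ A.rank) (hkp : k ≤ min n d)
    (hgap : sv sA (k + 1) < sv sA k)
    (hks : k ≤ s) (R : Matrix (Fin d) (Fin s) ℝ)
    (hkrankAR : k ≤ (A * R).rank) (hkq : k ≤ min n s)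
    (UR : Matrix (Fin n) (Fin (min n s)) ℝ) (sR : Fin (min n s) → ℝ)
    (VR : Matrix (Fin s) (Fin (min n s)) ℝ)
    (hSVDR : IsThinSVD (A * R) UR sR VR)
    (ν : ℝ) (hν0 : 0 < ν) (hν1 : ν < 1)
    (hdist : d2 (firstCols UR k hkq) (firstCols UA k hkp) ≤ ν) :
    IsApproxPCP A b UA VA hkp ν ν
      (A.mulVec ((R * firstCols VR k hkq * pinv (A * R * firstCols VR k hkq)).mulVec b)) :=
  statement2_general A b UA sA VA hSVD hkrank hkp R hkrankAR hkq UR sR VR hSVDR ν hdist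
end
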